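/- arXiv:2104.05877 — 5 statements merged into one kernel-verified Lean document; each statement's English description precedes it below -/
import Mathlib

section
/- Let A be an m×n real matrix, let P be an m×m orthogonal projector, and let Q be an n×n orthogonal projector. Then ‖A − P A Q‖_F² = ‖A − P A‖_F² + ‖P (A − A Q)‖_F². -/
open scoped Matrix

/-- The squared Frobenius norm of a matrix: `‖M‖_F² = Σᵢⱼ Mᵢⱼ²`. -/
def frobeniusNormSq {m n : ℕ} (M : Matrix (Fin m) (Fin n) ℝ) : ℝ :=
  ∑ i, ∑ j, (M i j) ^ 2

lemma frob_add {m n : ℕ} (X Y : Matrix (Fin m) (Fin n) ℝ) :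
    frobeniusNormSq (X + Y) =
      frobeniusNormSq X + frobeniusNormSq Y + 2 * (Xᵀ * Y).trace := by
  simp only [frobeniusNormSq, Matrix.trace, Matrix.diag, Matrix.mul_apply,
    Matrix.transpose_apply, Matrix.add_apply]
  rw [Finset.sum_comm (γ := Fin n)]
  rw [Finset.mul_sum, ← Finset.sum_add_distrib, ← Finset.sum_add_distrib]
  refine Finset.sum_congr rfl fun i _ => ?_
  rw [Finset.mul_sum, ← Finset.sum_add_distrib, ← Finset.sum_add_distrib]
  refine Finset.sum_congr rfl fun j _ => ?_
  ring

/-- For an `m × n` real matrix `A`, an `m × m` orthogonal projector `P`, and an `n × n`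
orthogonal projector `Q`, `‖A − P A Q‖_F² = ‖A − P A‖_F² + ‖P (A − A Q)‖_F²`. -/
theorem cur_error_frobenius_pythagoras {m n : ℕ}
    (A : Matrix (Fin m) (Fin n) ℝ)
    (P : Matrix (Fin m) (Fin m) ℝ) (hP1 : Pᵀ = P) (hP2 : P * P = P)
    (Q : Matrix (Fin n) (Fin n) ℝ) (hQ1 : Qᵀ = Q) (hQ2 : Q * Q = Q) :
    frobeniusNormSq (A - P * A * Q) =
      frobeniusNormSq (A - P * A) + frobeniusNormSq (P * (A - A * Q)) := by
  have hdecomp : A - P * A * Q = (A - P * A) + P * (A - A * Q) := by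
    rw [Matrix.mul_sub, ← Matrix.mul_assoc]
    abel
  have hzero : (A - P * A)ᵀ * (P * (A - A * Q)) = 0 := by
    rw [← Matrix.mul_assoc]
    have : (A - P * A)ᵀ * P = 0 := by
      rw [Matrix.transpose_sub, Matrix.transpose_mul, hP1, Matrix.sub_mul,
        Matrix.mul_assoc, hP2, sub_self]
    rw [this, Matrix.zero_mul]
  rw [hdecomp, frob_add, hzero, Matrix.trace_zero, mul_zero, add_zero]
end

section
/- Let A be an m×n real matrix, let P be an m×m orthogonal projector, and let Q be an n×n orthogonal projector. Then ‖A − P A Q‖₂² = sup over vectors v with ‖v‖₂ ≤ 1 of ( ‖(A − P A) v‖₂² + ‖P (A − A Q) v‖₂² ). -/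
/-!
Because `Pᵀ = P = P²`, every vector in the range of `A - P A` is orthogonal to the range of `P`.
Hence `A - P A Q = (A - P A) + P (A - A Q)` splits `(A - P A Q) v` into two orthogonal pieces,
and Pythagoras identifies the function under the supremum with `‖(A - P A Q) v‖²`, whose
supremum over the unit ball is the squared operator norm.
-/

open scoped Matrix

/-- The spectral norm of a matrix: the `ℓ² → ℓ²` operator norm. -/
noncomputable def matrixSpectralNorm {m n : ℕ} (M : Matrix (Fin m) (Fin n) ℝ) : ℝ :=
  ‖LinearMap.toContinuousLinearMap (Matrix.toEuclideanLin M)‖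

/-- The squared Euclidean (ℓ₂) norm of a vector in `ℝⁿ`. -/
noncomputable def euclNormSq {n : ℕ} (v : Fin n → ℝ) : ℝ :=
  ‖(WithLp.equiv 2 (Fin n → ℝ)).symm v‖ ^ 2

theorem ContinuousLinearMap.sSup_unitClosedBall_sq_eq_sq_norm {𝕜 E F : Type*}
    [DenselyNormedField 𝕜] [NormedAddCommGroup E] [SeminormedAddCommGroup F]
    [NormedSpace 𝕜 E] [NormedSpace 𝕜 F] (T : E →L[𝕜] F) :
    sSup ((fun x => ‖T x‖ ^ 2) '' Metric.closedBall 0 1) = ‖T‖ ^ 2 := by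
  have hball : (Metric.closedBall (0 : E) 1).Nonempty :=
    Metric.nonempty_closedBall.mpr zero_le_one
  have hbdd : BddAbove ((fun x => ‖T x‖) '' Metric.closedBall 0 1) := by
    refine ⟨‖T‖, ?_⟩
    rintro - ⟨x, hx, rfl⟩
    exact T.unit_le_opNorm x (mem_closedBall_zero_iff.1 hx)
  have hmono : MonotoneOn (· ^ 2 : ℝ → ℝ) ((fun x => ‖T x‖) '' Metric.closedBall 0 1) := by
    rintro - ⟨x, -, rfl⟩ - ⟨y, -, rfl⟩ hxy
    exact pow_le_pow_left₀ (norm_nonneg _) hxy 2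
  calc sSup ((fun x => ‖T x‖ ^ 2) '' Metric.closedBall 0 1)
      = sSup ((fun x => ‖T x‖) '' Metric.closedBall 0 1) ^ 2 := by
        rw [← Set.image_image (· ^ 2)]
        exact (hmono.map_csSup_of_continuousWithinAt (continuous_pow 2).continuousWithinAt
          (hball.image _) hbdd).symm
    _ = ‖T‖ ^ 2 := by rw [T.sSup_unitClosedBall_eq_norm]

namespace Matrix

variable {R l m n : Type*} [CommRing R] [Fintype m] {P : Matrix m m R}

theorem transpose_sub_mul_mul_eq_zero (hP1 : Pᵀ = P) (hP2 : P * P = P) (A : Matrix m n R) :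
    (A - P * A)ᵀ * P = 0 := by
  rw [transpose_sub, transpose_mul, hP1, Matrix.sub_mul, Matrix.mul_assoc, hP2, sub_self]

theorem dotProduct_sub_mul_mulVec_mul_mulVec_eq_zero [Fintype n] [Fintype l]
    (hP1 : Pᵀ = P) (hP2 : P * P = P) (A : Matrix m n R) (B : Matrix m l R)
    (v : n → R) (w : l → R) :
    ((A - P * A) *ᵥ v) ⬝ᵥ ((P * B) *ᵥ w) = 0 := by
  rw [dotProduct_mulVec, vecMul_mulVec, ← Matrix.mul_assoc,
    transpose_sub_mul_mul_eq_zero hP1 hP2, Matrix.zero_mul, vecMul_zero, zero_dotProduct]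

end Matrix

theorem euclNormSq_eq_dotProduct_self {n : ℕ} (v : Fin n → ℝ) : euclNormSq v = v ⬝ᵥ v := by
  rw [euclNormSq, EuclideanSpace.real_norm_sq_eq]
  simp [dotProduct, sq]

theorem euclNormSq_add_of_dotProduct_eq_zero {n : ℕ} {x y : Fin n → ℝ} (h : x ⬝ᵥ y = 0) :
    euclNormSq (x + y) = euclNormSq x + euclNormSq y := by
  simp only [euclNormSq_eq_dotProduct_self, add_dotProduct, dotProduct_add,
    dotProduct_comm y x, h]
  ring

theorem matrixSpectralNorm_sq_eq_sSup {m n : ℕ} (M : Matrix (Fin m) (Fin n) ℝ) :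
    matrixSpectralNorm M ^ 2 = sSup { x : ℝ | ∃ v : Fin n → ℝ,
      ‖(WithLp.equiv 2 (Fin n → ℝ)).symm v‖ ≤ 1 ∧ x = euclNormSq (M *ᵥ v) } := by
  rw [matrixSpectralNorm, ← ContinuousLinearMap.sSup_unitClosedBall_sq_eq_sq_norm]
  congr 1
  ext x
  constructor
  · rintro ⟨u, hu, rfl⟩
    exact ⟨u.ofLp, by simpa using hu, rfl⟩
  · rintro ⟨v, hv, rfl⟩
    exact ⟨WithLp.toLp 2 v, by simpa using hv, rfl⟩

theorem cur_error_spectral_sup_general {m n : ℕ}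
    (A : Matrix (Fin m) (Fin n) ℝ)
    (P : Matrix (Fin m) (Fin m) ℝ) (hP1 : Pᵀ = P) (hP2 : P * P = P)
    (Q : Matrix (Fin n) (Fin n) ℝ) :
    matrixSpectralNorm (A - P * A * Q) ^ 2 =
      sSup { x : ℝ | ∃ v : Fin n → ℝ, ‖(WithLp.equiv 2 (Fin n → ℝ)).symm v‖ ≤ 1 ∧
        x = euclNormSq ((A - P * A).mulVec v) + euclNormSq ((P * (A - A * Q)).mulVec v) } := by
  have hsplit : A - P * A * Q = (A - P * A) + P * (A - A * Q) := by
    rw [Matrix.mul_sub, ← Matrix.mul_assoc]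
    abel
  simp_rw [hsplit, matrixSpectralNorm_sq_eq_sSup, Matrix.add_mulVec,
    euclNormSq_add_of_dotProduct_eq_zero
      (Matrix.dotProduct_sub_mul_mulVec_mul_mulVec_eq_zero hP1 hP2 _ _ _ _)]

/-- For an `m × n` real matrix `A`, an `m × m` orthogonal projector `P`, and an `n × n`
orthogonal projector `Q`,
`‖A − P A Q‖₂² = sup_{‖v‖₂ ≤ 1} ( ‖(A − P A) v‖₂² + ‖P (A − A Q) v‖₂² )`. -/
theorem cur_error_spectral_sup {m n : ℕ}
    (A : Matrix (Fin m) (Fin n) ℝ)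
    (P : Matrix (Fin m) (Fin m) ℝ) (hP1 : Pᵀ = P) (hP2 : P * P = P)
    (Q : Matrix (Fin n) (Fin n) ℝ) (hQ1 : Qᵀ = Q) (hQ2 : Q * Q = Q) :
    matrixSpectralNorm (A - P * A * Q) ^ 2 =
      sSup { x : ℝ | ∃ v : Fin n → ℝ, ‖(WithLp.equiv 2 (Fin n → ℝ)).symm v‖ ≤ 1 ∧
        x = euclNormSq ((A - P * A).mulVec v) + euclNormSq ((P * (A - A * Q)).mulVec v) } :=
  cur_error_spectral_sup_general A P hP1 hP2 Q
end

section
/- (Lemma: sketch for randomized rangefinder.) Let μ be a probability measure on ℝ that is absolutely continuous with respect to the Lebesgue measure, and let Γ be a random l×m real matrix whose l·m entries are i.i.d. with common law μ (i.e., Γ is distributed according to the product measure on the space of l×m matrices). Let A be a fixed m×n real matrix with rank r, and suppose l ≤ r. Then with probability 1, the matrix X = Γ A has full row rank, i.e., rank(Γ A) = l. -/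
/-!
The rows of `Γ * A` are the images `Γᵢ A` of the i.i.d. rows `Γᵢ`. Adding the rows one at a
time, as long as fewer than `rank A` rows have been drawn, the next row keeps the images independent
unless it falls into the preimage under `x ↦ x A` of the span of the previous images, a proper
subspace of `ℝᵐ`. Proper subspaces are Lebesgue-null, and the law of a row is absolutely
continuous with respect to Lebesgue measure, so this happens with probability zero.
-/

open MeasureTheory Matrix

theorem MeasureTheory.Measure.AbsolutelyContinuous.pi_fin {α : Type*} [MeasurableSpace α]
    {μ ν : Measure α} [SigmaFinite μ] [SigmaFinite ν] (h : μ ≪ ν) :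
    ∀ k : ℕ, Measure.pi (fun _ : Fin k => μ) ≪ Measure.pi (fun _ : Fin k => ν)
  | 0 => by
    rw [Measure.pi_of_empty (fun _ : Fin 0 => μ), Measure.pi_of_empty (fun _ : Fin 0 => ν)]
  | k + 1 => by
    have hprod := (h.prod (pi_fin h k)).map
      (MeasurableEquiv.piFinSuccAbove (fun _ : Fin (k + 1) => α) 0).symm.measurable
    rwa [((measurePreserving_piFinSuccAbove (fun _ => μ) 0).symm _).map_eq,
      ((measurePreserving_piFinSuccAbove (fun _ => ν) 0).symm _).map_eq] at hprod

theorem measure_pi_submodule_eq_zero_of_absolutelyContinuous {μ : Measure ℝ} [SigmaFinite μ]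
    (hμ : μ ≪ volume) {m : ℕ} {W : Submodule ℝ (Fin m → ℝ)} (hW : W ≠ ⊤) :
    Measure.pi (fun _ : Fin m => μ) W = 0 :=
  hμ.pi_fin m <| by rw [← volume_pi]; exact Measure.addHaar_submodule _ W hW

section

variable {E F : Type*} [NormedAddCommGroup E] [NormedSpace ℝ E] [FiniteDimensional ℝ E]
  [NormedAddCommGroup F] [NormedSpace ℝ F]

theorem isOpen_setOf_linearIndependent_comp {ι : Type*} [Finite ι] (f : E →ₗ[ℝ] F) :
    IsOpen {Γ : ι → E | LinearIndependent ℝ (f ∘ Γ)} :=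
  isOpen_setOfPred_linearIndependent.preimage
    (continuous_pi fun i => f.continuous_of_finiteDimensional.comp (continuous_apply i))

theorem ae_linearIndependent_comp [MeasurableSpace E] [BorelSpace E] {ν : Measure E}
    [SigmaFinite ν] (hν : ∀ W : Submodule ℝ E, W ≠ ⊤ → ν W = 0) (f : E →ₗ[ℝ] F) :
    ∀ l ≤ Module.finrank ℝ (LinearMap.range f),
      ∀ᵐ Γ ∂(Measure.pi fun _ : Fin l => ν), LinearIndependent ℝ (f ∘ Γ)
  | 0, _ => ae_of_all _ fun _ => linearIndependent_empty_type
  | l + 1, hl => by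
    have hmp := measurePreserving_piFinSuccAbove (fun _ : Fin (l + 1) => ν) 0
    set e := MeasurableEquiv.piFinSuccAbove (fun _ : Fin (l + 1) => E) 0
    suffices h : ∀ᵐ z ∂ν.prod (Measure.pi fun _ : Fin l => ν),
        LinearIndependent ℝ (f ∘ Fin.cons z.1 z.2) by
      filter_upwards [hmp.quasiMeasurePreserving.ae h] with Γ hΓ
      simpa [e, MeasurableEquiv.piFinSuccAbove, Fin.insertNth_zero'] using hΓ
    have hmeas :
        MeasurableSet {z : E × (Fin l → E) | LinearIndependent ℝ (f ∘ Fin.cons z.1 z.2)} :=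
      ((isOpen_setOf_linearIndependent_comp f).preimage
        (continuous_fst.finCons continuous_snd)).measurableSet
    rw [Measure.ae_prod_iff_ae_ae hmeas, Measure.ae_ae_comm hmeas]
    filter_upwards [ae_linearIndependent_comp hν f l (by omega)] with Γ hΓ
    set W := (Submodule.span ℝ (Set.range (f ∘ Γ))).comap f
    have hW : W ≠ ⊤ := by
      intro htop
      have hrange : LinearMap.range f ≤ Submodule.span ℝ (Set.range (f ∘ Γ)) :=
        LinearMap.range_le_iff_comap.mpr htop
      have := Module.Finite.span_of_finite ℝ (Set.finite_range (f ∘ Γ))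
      have hcard := (Submodule.finrank_mono hrange).trans (finrank_range_le_card (f ∘ Γ))
      rw [Fintype.card_fin] at hcard
      omega
    filter_upwards [measure_eq_zero_iff_ae_notMem.mp (hν W hW)] with x hx
    rw [Fin.comp_cons]
    exact linearIndependent_finCons.mpr ⟨hΓ, hx⟩

end

/-- Sketch for the randomized rangefinder: if `Γ` is a random `l × m` real matrix whose
entries are i.i.d. with common law `μ`, a probability measure absolutely continuous with
respect to Lebesgue measure (so `Γ` is distributed according to the product measure), and
`A` is a fixed `m × n` real matrix of rank `r` with `l ≤ r`, then almost surely the row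
sketch `X = Γ A` has full row rank, i.e., `rank (Γ A) = l`. -/
theorem sketch_full_row_rank {l m n r : ℕ}
    (μ : Measure ℝ) [IsProbabilityMeasure μ] (hμ : μ ≪ (volume : Measure ℝ))
    (A : Matrix (Fin m) (Fin n) ℝ) (hA : A.rank = r) (hlr : l ≤ r) :
    ∀ᵐ Γ ∂(Measure.pi fun _ : Fin l => Measure.pi fun _ : Fin m => μ),
      (Matrix.of Γ * A).rank = l := by
  have hrange : Module.finrank ℝ (LinearMap.range A.vecMulLinear) = r := by
    rw [range_vecMulLinear, ← rank_eq_finrank_span_row, hA]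
  have hnull (W : Submodule ℝ (Fin m → ℝ)) (hW : W ≠ ⊤) :
      Measure.pi (fun _ : Fin m => μ) W = 0 :=
    measure_pi_submodule_eq_zero_of_absolutelyContinuous hμ hW
  filter_upwards [ae_linearIndependent_comp hnull A.vecMulLinear l (hrange ▸ hlr)] with Γ hΓ
  exact hΓ.rank_matrix.trans (Fintype.card_fin l)
end

section
/- (Tightness of the LUPP entry bound; Kahan-type example.) Fix l ≥ 1 and p ≥ 1. Let R₁ be the l×l real upper triangular matrix with R₁(i,i) = 1 for all i, R₁(i,j) = −1 for all i < j ≤ l, and R₁(i,j) = 0 for i > j; and let R₂ be the l×p matrix all of whose entries equal 1. Then (R₁⁻¹ R₂)(i,j) = 2^{l−i} for all 1 ≤ i ≤ l and 1 ≤ j ≤ p. -/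
open scoped Matrix

lemma aux_geom (l i : ℕ) (hi : i < l) :
    ∑ k ∈ Finset.Ico (i+1) l, (2:ℝ)^(l-1-k) = 2^(l-1-i) - 1 := by
  rw [Finset.sum_Ico_eq_sum_range]
  have h1 : l - (i+1) = l - 1 - i := by omega
  have h2 : ∀ k ∈ Finset.range (l - (i+1)), (2:ℝ)^(l-1-(i+1+k)) = 2^(l-1-i-1-k) := by
    intro k hk; congr 1; omega
  rw [Finset.sum_congr rfl h2, h1, Finset.sum_range_reflect (fun k => (2:ℝ)^k) (l-1-i)]
  have := geom_sum_eq (by norm_num : (2:ℝ) ≠ 1) (l-1-i)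
  rw [this]; ring

/-- Tightness of the LUPP entry bound (Kahan-type example): for `l, p ≥ 1`, let `R₁` be the
`l × l` unit upper triangular matrix with `−1` in every strictly upper triangular entry, and
let `R₂` be the `l × p` all-ones matrix. Then every entry of `R₁⁻¹ R₂` in (1-based) row `i`
equals `2^{l−i}` (for `i : Fin l`, the 1-based row index is `i + 1`, giving `2^(l - 1 - i)`). -/
theorem lupp_entry_bound_tight {l p : ℕ} (hl : 1 ≤ l) (hp : 1 ≤ p)
    (R₁ : Matrix (Fin l) (Fin l) ℝ)
    (hR₁ : ∀ i j : Fin l, R₁ i j = if i = j then 1 else if i < j then -1 else 0)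
    (R₂ : Matrix (Fin l) (Fin p) ℝ)
    (hR₂ : ∀ (i : Fin l) (j : Fin p), R₂ i j = 1) :
    ∀ (i : Fin l) (j : Fin p), (R₁⁻¹ * R₂) i j = 2 ^ (l - 1 - (i : ℕ)) := by
  set M : Matrix (Fin l) (Fin p) ℝ :=
    Matrix.of (fun (k : Fin l) (_ : Fin p) => (2:ℝ)^(l-1-(k:ℕ))) with hM
  have hdet : R₁.det = 1 := by
    rw [Matrix.det_of_upperTriangular]
    · apply Finset.prod_eq_one
      intro i _
      simp [hR₁]
    · intro i j hij
      have h : (j:ℕ) < (i:ℕ) := hij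
      rw [hR₁, if_neg (show ¬ i = j from ne_of_gt hij), if_neg (show ¬ i < j from not_lt.mpr hij.le)]
  have hmul : R₁ * M = R₂ := by
    ext i j
    rw [Matrix.mul_apply, hR₂]
    set g : ℕ → ℝ := fun n => if (i:ℕ) = n then (2:ℝ)^(l-1-(i:ℕ))
      else if (i:ℕ) < n then -(2:ℝ)^(l-1-n) else 0 with hg
    have hfin : ∀ k : Fin l, R₁ i k * M k j = g (k:ℕ) := by
      intro k
      rw [hR₁, hg]
      simp only [hM, Matrix.of_apply, Fin.ext_iff, Fin.lt_def]
      split_ifs with h1 h2 <;> simp_all <;> omega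
    rw [Finset.sum_congr rfl (fun k _ => hfin k), Fin.sum_univ_eq_sum_range]
    have hi : (i:ℕ) < l := i.isLt
    rw [Finset.range_eq_Ico, ← Finset.sum_Ico_consecutive _ (Nat.zero_le ((i:ℕ)+1)) hi,
      ← Finset.range_eq_Ico, Finset.sum_range_succ]
    have h0 : ∑ k ∈ Finset.range (i:ℕ), g k = 0 := by
      apply Finset.sum_eq_zero
      intro k hk
      simp only [Finset.mem_range] at hk
      rw [hg]
      simp only
      rw [if_neg (by omega), if_neg (by omega)]
    have h1 : ∑ k ∈ Finset.Ico ((i:ℕ)+1) l, g k = -(2^(l-1-(i:ℕ)) - 1) := by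
      rw [← aux_geom l (i:ℕ) hi, ← Finset.sum_neg_distrib]
      apply Finset.sum_congr rfl
      intro k hk
      simp only [Finset.mem_Ico] at hk
      rw [hg]
      simp only
      rw [if_neg (by omega), if_pos (by omega)]
    rw [h0, h1, hg]
    simp only
    norm_num
  have huD : IsUnit R₁.det := by rw [hdet]; exact isUnit_one
  intro i j
  rw [← hmul, Matrix.nonsing_inv_mul_cancel_left _ _ huD]
  simp [hM]
end

section
/- Let R₁ be an l×l real upper triangular matrix with unit diagonal satisfying |R₁(i,j)| ≤ 1 for all i ≤ j, and let R₂ be an l×p real matrix with |R₂(i,j)| ≤ 1 for all entries. Define x_i = max_{1 ≤ j ≤ p} |(R₁⁻¹ R₂)(i,j)| for 1 ≤ i ≤ l. Then x_l ≤ 1 and, for each i < l, x_i ≤ 1 + Σ_{ι=i+1}^{l} x_ι. -/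
open scoped Matrix

/-- Let `R₁` be unit upper triangular with entries bounded by `1` in absolute value, `R₂`
an `l × p` matrix with entries bounded by `1` in absolute value, and set
`x_i = max_j |(R₁⁻¹ R₂)(i,j)|`. Then `x_l ≤ 1` (last row), and for every earlier (1-based)
row `i < l`, `x_i ≤ 1 + Σ_{ι=i+1}^{l} x_ι`. -/
theorem lupp_row_max_recursion {l p : ℕ} (hl : 0 < l) (hp : 0 < p)
    (R₁ : Matrix (Fin l) (Fin l) ℝ)
    (hdiag : ∀ i, R₁ i i = 1)
    (htri : ∀ i j : Fin l, j < i → R₁ i j = 0)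
    (hR₁ : ∀ i j : Fin l, i ≤ j → |R₁ i j| ≤ 1)
    (R₂ : Matrix (Fin l) (Fin p) ℝ)
    (hR₂ : ∀ (i : Fin l) (j : Fin p), |R₂ i j| ≤ 1)
    (x : Fin l → ℝ)
    (hx : ∀ i : Fin l,
      x i = Finset.univ.sup' ⟨⟨0, hp⟩, Finset.mem_univ _⟩ fun j : Fin p => |(R₁⁻¹ * R₂) i j|) :
    x ⟨l - 1, by omega⟩ ≤ 1 ∧
    (∀ i : Fin l, (i : ℕ) < l - 1 → x i ≤ 1 + ∑ ι ∈ Finset.Ioi i, x ι) := by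
  set Y := R₁⁻¹ * R₂ with hY
  have hdet : R₁.det = 1 := by
    rw [Matrix.det_of_upperTriangular (by intro i j hij; exact htri i j hij)]
    simp [hdiag]
  have hunit : IsUnit R₁.det := by simp [hdet]
  have hkey : ∀ (i : Fin l) (j : Fin p),
      Y i j = R₂ i j - ∑ ι ∈ Finset.Ioi i, R₁ i ι * Y ι j := by
    intro i j
    have h1 : R₁ * Y = R₂ := by
      rw [hY, ← Matrix.mul_assoc, Matrix.mul_nonsing_inv _ hunit, Matrix.one_mul]
    have h2 : ∑ ι, R₁ i ι * Y ι j = R₂ i j := by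
      have := congrFun (congrFun h1 i) j
      simpa [Matrix.mul_apply] using this
    have h3 : ∑ ι, R₁ i ι * Y ι j = ∑ ι ∈ Finset.Ici i, R₁ i ι * Y ι j := by
      symm
      apply Finset.sum_subset (Finset.subset_univ _)
      intro ι _ hι
      have hlt : ι < i := by simpa using hι
      rw [htri i ι hlt, zero_mul]
    have h4 : Finset.Ici i = insert i (Finset.Ioi i) := by
      ext a; simp [Finset.mem_Ici, Finset.mem_Ioi, le_iff_lt_or_eq, or_comm, eq_comm]
    rw [h3, h4, Finset.sum_insert (by simp), hdiag, one_mul] at h2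
    linarith
  have hYx : ∀ (ι : Fin l) (j : Fin p), |Y ι j| ≤ x ι := by
    intro ι j
    rw [hx ι]
    exact Finset.le_sup' (fun j : Fin p => |Y ι j|) (Finset.mem_univ j)
  constructor
  · rw [hx ⟨l - 1, by omega⟩]
    apply Finset.sup'_le
    intro j _
    rw [hkey]
    have hempty : ∑ ι ∈ Finset.Ioi (⟨l - 1, by omega⟩ : Fin l), R₁ ⟨l - 1, by omega⟩ ι * Y ι j = 0 := by
      apply Finset.sum_eq_zero
      intro ι hι
      have := Finset.mem_Ioi.mp hι
      have h1 : l - 1 < (ι : ℕ) := this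
      have := ι.isLt
      omega
    rw [hempty, sub_zero]
    exact hR₂ _ j
  · intro i hi
    rw [hx i]
    apply Finset.sup'_le
    intro j _
    rw [hkey]
    calc |R₂ i j - ∑ ι ∈ Finset.Ioi i, R₁ i ι * Y ι j|
        ≤ |R₂ i j| + |∑ ι ∈ Finset.Ioi i, R₁ i ι * Y ι j| := abs_sub _ _
      _ ≤ 1 + ∑ ι ∈ Finset.Ioi i, x ι := by
          gcongr
          · exact hR₂ i j
          · calc |∑ ι ∈ Finset.Ioi i, R₁ i ι * Y ι j|
                ≤ ∑ ι ∈ Finset.Ioi i, |R₁ i ι * Y ι j| := Finset.abs_sum_le_sum_abs _ _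
              _ ≤ ∑ ι ∈ Finset.Ioi i, x ι := by
                  apply Finset.sum_le_sum
                  intro ι hι
                  have hle : i ≤ ι := le_of_lt (Finset.mem_Ioi.mp hι)
                  rw [abs_mul]
                  calc |R₁ i ι| * |Y ι j| ≤ 1 * x ι :=
                        mul_le_mul (hR₁ i ι hle) (hYx ι j) (abs_nonneg _) zero_le_one
                    _ = x ι := one_mul _
end
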